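/- (Example: fractal n-gons) Fix n ≥ 1, let b = cos(2π/n) + i·sin(2π/n) ∈ ℂ and let λ ∈ ℂ with |λ| < 1. Consider on ℂ the R-IFS {g, f} with g(z) = b·z (a surjective isometry fixing 0) and f(z) = λz + 1 (a contraction). Then the minimal invariant set of {g, f} is the unique nonempty compact set A ⊆ ℂ satisfying A = ⋃_{k=1}^{n} (b^k λ · A + b^k), i.e. A = ⋃_{k=1}^{n} f_k(A) where f_k(z) = b^k λ z + b^k. -/

import Mathlib

/-!
Since `b ^ n = 1`, the maps `f_k = g^[k] ∘ f` (`1 ≤ k ≤ n`) are exactly the affine maps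
`z ↦ b^k λ z + b^k`. If `X₀` is invariant under `{g, f}`, then `B = ⋃ f_k(X₀)` is contained in
`X₀`, is permuted cyclically by `g`, and satisfies `f(B) ⊆ f(X₀) = f_n(X₀) ⊆ B`; so `B` is a
compact invariant set and minimality forces `X₀ = B`. Uniqueness holds because each `f_k` is a
`|λ|`-contraction, so `A ↦ ⋃ f_k(A)` contracts the Hausdorff distance by the factor `|λ| < 1`.
-/

open Set Metric Function
open scoped NNReal ENNReal

section HausdorffContraction

variable {α : Type*} [PseudoEMetricSpace α] {F : α → α} {K : ℝ≥0} {s t : Set α}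

theorem LipschitzWith.infEDist_image_le (hF : LipschitzWith K F) (x : α) (ht : t.Nonempty) :
    infEDist (F x) (F '' t) ≤ K * infEDist x t := by
  have : Nonempty t := ht.to_subtype
  calc infEDist (F x) (F '' t) ≤ ⨅ y : t, K * edist x y :=
        le_iInf fun y => (infEDist_le_edist_of_mem (mem_image_of_mem F y.2)).trans (hF x y)
    _ = K * infEDist x t := by
      rw [infEDist, iInf_subtype', ENNReal.mul_iInf fun h => absurd h ENNReal.coe_ne_top]

theorem LipschitzWith.hausdorffEDist_image_le (hF : LipschitzWith K F) (hs : s.Nonempty)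
    (ht : t.Nonempty) : hausdorffEDist (F '' s) (F '' t) ≤ K * hausdorffEDist s t := by
  refine hausdorffEDist_le_of_infEDist ?_ ?_ <;> rintro _ ⟨x, hx, rfl⟩
  · exact (hF.infEDist_image_le x ht).trans
      (mul_le_mul_right (infEDist_le_hausdorffEDist_of_mem hx) _)
  · rw [hausdorffEDist_comm]
    exact (hF.infEDist_image_le x hs).trans
      (mul_le_mul_right (infEDist_le_hausdorffEDist_of_mem hx) _)

theorem hausdorffEDist_biUnion_image_le {ι : Type*} (S : Finset ι) {F : ι → α → α}
    (hF : ∀ i, LipschitzWith K (F i)) (hs : s.Nonempty) (ht : t.Nonempty) :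
    hausdorffEDist (⋃ i ∈ S, F i '' s) (⋃ i ∈ S, F i '' t) ≤ K * hausdorffEDist s t :=
  hausdorffEDist_iUnion_le.trans <| iSup_le fun i => hausdorffEDist_iUnion_le.trans <|
    iSup_le fun _ => (hF i).hausdorffEDist_image_le hs ht

end HausdorffContraction

theorem eq_of_eq_biUnion_image_of_lipschitzWith {α ι : Type*} [MetricSpace α] (S : Finset ι)
    {F : ι → α → α} {K : ℝ≥0} (hK : K < 1) (hF : ∀ i, LipschitzWith K (F i)) {A B : Set α}
    (hAne : A.Nonempty) (hAc : IsClosed A) (hAb : Bornology.IsBounded A)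
    (hBne : B.Nonempty) (hBc : IsClosed B) (hBb : Bornology.IsBounded B)
    (hA : A = ⋃ i ∈ S, F i '' A) (hB : B = ⋃ i ∈ S, F i '' B) : A = B := by
  have hfin : hausdorffEDist A B ≠ ∞ :=
    hausdorffEDist_ne_top_of_nonempty_of_bounded hAne hBne hAb hBb
  have hcontr : hausdorffEDist A B ≤ K * hausdorffEDist A B :=
    calc hausdorffEDist A B = hausdorffEDist (⋃ i ∈ S, F i '' A) (⋃ i ∈ S, F i '' B) := by
          rw [← hA, ← hB]
      _ ≤ K * hausdorffEDist A B := hausdorffEDist_biUnion_image_le S hF hAne hBne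
  refine (hAc.hausdorffEDist_zero_iff hBc).mp (by_contra fun h0 => ?_)
  have := ENNReal.mul_lt_mul_left h0 hfin (ENNReal.coe_lt_one_iff.mpr hK)
  exact (hcontr.trans_lt (by simpa using this)).false

section Rotation

variable {α : Type*} {g f : α → α} {n : ℕ} {X : Set α}

theorem Set.MapsTo.image_eq_of_iterate_eq_id (h : MapsTo g X X) (hg : g^[n] = id) (hn : n ≠ 0) :
    g '' X = X := by
  obtain ⟨m, rfl⟩ := Nat.exists_eq_add_one_of_ne_zero hn
  exact h.image_subset.antisymm fun x hx =>
    ⟨g^[m] x, h.iterate m hx, by rw [← iterate_succ_apply' g, hg, id]⟩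

theorem biUnion_iterate_comp_image_subset (S : Finset ℕ) (hg : MapsTo g X X)
    (hf : MapsTo f X X) : ⋃ k ∈ S, (g^[k] ∘ f) '' X ⊆ X :=
  iUnion₂_subset fun k _ => ((hg.iterate k).comp hf).image_subset

theorem mapsTo_biUnion_iterate_comp_image (hg : g^[n] = id) :
    MapsTo g (⋃ k ∈ Finset.Icc 1 n, (g^[k] ∘ f) '' X)
      (⋃ k ∈ Finset.Icc 1 n, (g^[k] ∘ f) '' X) := by
  simp only [MapsTo, mem_iUnion, mem_image, Finset.mem_Icc, comp_apply]
  rintro _ ⟨k, hk, x, hx, rfl⟩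
  rcases hk.2.lt_or_eq with hlt | rfl
  · exact ⟨k + 1, by omega, x, hx, iterate_succ_apply' g k (f x)⟩
  · exact ⟨1, by omega, x, hx, by rw [iterate_one, hg, id]⟩

theorem biUnion_iterate_comp_image_eq_image_union_image (hg : g^[n] = id) (hn : n ≠ 0)
    (hgX : MapsTo g X X) (hfX : MapsTo f X X) :
    ⋃ k ∈ Finset.Icc 1 n, (g^[k] ∘ f) '' X =
      g '' (⋃ k ∈ Finset.Icc 1 n, (g^[k] ∘ f) '' X) ∪
        f '' ⋃ k ∈ Finset.Icc 1 n, (g^[k] ∘ f) '' X := by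
  set B := ⋃ k ∈ Finset.Icc 1 n, (g^[k] ∘ f) '' X
  have hfB : f '' B ⊆ B :=
    calc f '' B ⊆ f '' X := image_mono (biUnion_iterate_comp_image_subset _ hgX hfX)
      _ = (g^[n] ∘ f) '' X := by rw [hg, id_comp]
      _ ⊆ B := subset_biUnion_of_mem (u := fun k => (g^[k] ∘ f) '' X)
          (Finset.mem_Icc.mpr ⟨Nat.one_le_iff_ne_zero.mpr hn, le_rfl⟩)
  rw [(mapsTo_biUnion_iterate_comp_image hg).image_eq_of_iterate_eq_id hg hn,
    union_eq_self_of_subset_right hfB]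

end Rotation

theorem Complex.cos_two_pi_div_add_sin_mul_I_pow_self {n : ℕ} (hn : n ≠ 0) :
    (cos (2 * Real.pi / n) + sin (2 * Real.pi / n) * I) ^ n = 1 := by
  rw [← exp_mul_I, show (2 * Real.pi / n : ℂ) * I = 2 * Real.pi * I / n by ring]
  exact (isPrimitiveRoot_exp n hn).pow_eq_one

theorem lipschitzWith_mul_add {R : Type*} [SeminormedRing R] (a c : R) :
    LipschitzWith ‖a‖₊ fun z => a * z + c :=
  LipschitzWith.of_dist_le_mul fun x y => by
    simpa [dist_eq_norm, ← mul_sub] using norm_mul_le a (x - y)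

/-- Example (fractal n-gons): for `b = cos(2π/n) + i·sin(2π/n)` and `|λ| < 1`, the minimal
invariant set of the R-IFS `{z ↦ b·z, z ↦ λ·z + 1}` on `ℂ` is the unique nonempty compact
set `A` with `A = ⋃_{k=1}^{n} (b^k λ·A + b^k)`, i.e. the fractal n-gon. -/
theorem fractal_ngon (n : ℕ) (hn : 1 ≤ n)
    (b lam : ℂ)
    (hb : b = Complex.cos (2 * Real.pi / n) + Complex.sin (2 * Real.pi / n) * Complex.I)
    (hlam : ‖lam‖ < 1)
    (g f : ℂ → ℂ)
    (hg : ∀ z, g z = b * z)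
    (hf : ∀ z, f z = lam * z + 1)
    -- X₀ is the minimal invariant set of the R-IFS {g, f}
    (X₀ : Set ℂ)
    (h0ne : X₀.Nonempty) (h0c : IsCompact X₀)
    (h0inv : X₀ = (g '' X₀) ∪ (f '' X₀))
    (h0min : ∀ X : Set ℂ, X.Nonempty → IsClosed X → Bornology.IsBounded X →
      X = (g '' X) ∪ (f '' X) → X₀ ⊆ X) :
    X₀ = (⋃ k ∈ Finset.Icc 1 n, (fun z => b ^ k * lam * z + b ^ k) '' X₀) ∧
    ∀ A : Set ℂ, A.Nonempty → IsCompact A →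
      A = (⋃ k ∈ Finset.Icc 1 n, (fun z => b ^ k * lam * z + b ^ k) '' A) → A = X₀ := by
  obtain rfl : g = (b * ·) := funext hg
  obtain rfl : f = (lam * · + 1) := funext hf
  have hn0 : n ≠ 0 := Nat.one_le_iff_ne_zero.mp hn
  have hbn : b ^ n = 1 := hb ▸ Complex.cos_two_pi_div_add_sin_mul_I_pow_self hn0
  have hpieces : ∀ k, (fun z => b ^ k * lam * z + b ^ k) = (b * ·)^[k] ∘ (lam * · + 1) :=
    fun k => funext fun z => by simp only [comp_apply, mul_left_iterate_apply]; ring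
  have hlip : ∀ k, LipschitzWith ‖lam‖₊ ((b * ·)^[k] ∘ (lam * · + 1)) := fun k => by
    rw [← hpieces]
    simpa [Complex.nnnorm_eq_one_of_pow_eq_one hbn hn0] using
      lipschitzWith_mul_add (b ^ k * lam) (b ^ k)
  have hgn : (b * ·)^[n] = id := by
    rw [mul_left_iterate, hbn]
    exact funext one_mul
  simp only [hpieces]
  set B := ⋃ k ∈ Finset.Icc 1 n, ((b * ·)^[k] ∘ (lam * · + 1)) '' X₀
  have hgX := mapsTo_iff_image_subset.mpr (subset_union_left.trans h0inv.superset)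
  have hfX := mapsTo_iff_image_subset.mpr (subset_union_right.trans h0inv.superset)
  have hBc : IsCompact B :=
    (Finset.Icc 1 n).finite_toSet.isCompact_biUnion fun k _ => h0c.image (hlip k).continuous
  have hBne : B.Nonempty :=
    nonempty_biUnion.mpr ⟨1, Finset.mem_Icc.mpr ⟨le_rfl, hn⟩, h0ne.image _⟩
  have hX₀ : X₀ = B :=
    (h0min B hBne hBc.isClosed hBc.isBounded
      (biUnion_iterate_comp_image_eq_image_union_image hgn hn0 hgX hfX)).antisymm
      (biUnion_iterate_comp_image_subset _ hgX hfX)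
  exact ⟨hX₀, fun A hAne hAc hA => eq_of_eq_biUnion_image_of_lipschitzWith _
    (by exact_mod_cast hlam) hlip hAne hAc.isClosed hAc.isBounded h0ne h0c.isClosed
    h0c.isBounded hA hX₀⟩
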